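/- arXiv:1510.00777 — 3 statements merged into one kernel-verified Lean document; each statement's English description precedes it below -/
import Mathlib

section
/- Let n and k be positive integers. Then, as polynomials in ℤ[x], Σ_{i=0}^{n−k} C(n, i+k) · x^i = Σ_{i=0}^{n−1} C(n−i−1, k−1) · (x+1)^i, where C(a,b) denotes the binomial coefficient, taken to be 0 when b > a. In particular, the polynomial Σ_{i≥0} C(n, i+k) x^i is (x+1)-positive. -/
open Polynomial

/-- A polynomial in `ℤ[x]` is `(x+1)`-positive if it is a linear combination of powers of
`x+1` with non-negative integer coefficients. -/
def XAddOnePositive (p : Polynomial ℤ) : Prop :=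
  ∃ (N : ℕ) (c : ℕ → ℕ), p = ∑ i ∈ Finset.range N, Polynomial.C ((c i : ℤ)) * (Polynomial.X + 1) ^ i

lemma bin_aux (m : ℕ) : ∀ n : ℕ,
    (∑ i ∈ Finset.range (n + 1), Polynomial.C ((n.choose (i + (m + 1)) : ℤ)) * Polynomial.X ^ i)
      = ∑ i ∈ Finset.range n, Polynomial.C (((n - i - 1).choose m : ℤ)) * (Polynomial.X + 1) ^ i := by
  intro n
  induction n with
  | zero => simp
  | succ n ih =>
    have pascal : ∀ i : ℕ, ((n + 1).choose (i + (m + 1)) : ℤ)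
        = (n.choose (i + m) : ℤ) + (n.choose (i + (m + 1)) : ℤ) := by
      intro i
      have h : i + (m + 1) = (i + m) + 1 := by ring
      rw [h, Nat.choose_succ_succ]
      push_cast [Nat.succ_eq_add_one]
      ring
    calc (∑ i ∈ Finset.range (n + 1 + 1), Polynomial.C (((n + 1).choose (i + (m + 1)) : ℤ)) * Polynomial.X ^ i)
        = (∑ i ∈ Finset.range (n + 1 + 1), Polynomial.C ((n.choose (i + (m + 1)) : ℤ)) * Polynomial.X ^ i)
          + (∑ i ∈ Finset.range (n + 1 + 1), Polynomial.C ((n.choose (i + m) : ℤ)) * Polynomial.X ^ i) := by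
          rw [← Finset.sum_add_distrib]
          refine Finset.sum_congr rfl fun i _ => ?_
          rw [pascal i, map_add]
          ring
      _ = (∑ i ∈ Finset.range (n + 1), Polynomial.C ((n.choose (i + (m + 1)) : ℤ)) * Polynomial.X ^ i)
          + (Polynomial.X * (∑ i ∈ Finset.range (n + 1), Polynomial.C ((n.choose (i + (m + 1)) : ℤ)) * Polynomial.X ^ i)
             + Polynomial.C ((n.choose m : ℤ))) := by
          congr 1
          · rw [Finset.sum_range_succ]
            have : n.choose (n + 1 + (m + 1)) = 0 := Nat.choose_eq_zero_of_lt (by omega)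
            simp [this]
          · rw [Finset.sum_range_succ']
            rw [Finset.mul_sum]
            congr 1
            · refine Finset.sum_congr rfl fun i _ => ?_
              have : i + 1 + m = i + (m + 1) := by ring
              rw [this]
              ring
            · simp
      _ = (Polynomial.X + 1) * (∑ i ∈ Finset.range n, Polynomial.C (((n - i - 1).choose m : ℤ)) * (Polynomial.X + 1) ^ i)
          + Polynomial.C ((n.choose m : ℤ)) := by rw [ih]; ring
      _ = ∑ i ∈ Finset.range (n + 1), Polynomial.C (((n + 1 - i - 1).choose m : ℤ)) * (Polynomial.X + 1) ^ i := by
          rw [Finset.sum_range_succ', Finset.mul_sum]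
          congr 1
          · refine Finset.sum_congr rfl fun i _ => ?_
            have h2 : n + 1 - (i + 1) - 1 = n - i - 1 := by omega
            rw [h2]
            ring
          · simp

/-- **Lemma.** For positive integers `n` and `k`,
`Σ_{i=0}^{n−k} C(n, i+k) xⁱ = Σ_{i=0}^{n−1} C(n−i−1, k−1) (x+1)ⁱ` in `ℤ[x]`;
in particular the left-hand side is `(x+1)`-positive. -/
theorem bin_lower_expansion (n k : ℕ) (hn : 0 < n) (hk : 0 < k) :
    (∑ i ∈ Finset.range (n - k + 1), Polynomial.C ((n.choose (i + k) : ℤ)) * Polynomial.X ^ i)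
      = (∑ i ∈ Finset.range n, Polynomial.C (((n - i - 1).choose (k - 1) : ℤ)) * (Polynomial.X + 1) ^ i)
    ∧ XAddOnePositive
        (∑ i ∈ Finset.range (n - k + 1), Polynomial.C ((n.choose (i + k) : ℤ)) * Polynomial.X ^ i) := by
  have hext : (∑ i ∈ Finset.range (n - k + 1), Polynomial.C ((n.choose (i + k) : ℤ)) * Polynomial.X ^ i)
      = ∑ i ∈ Finset.range (n + 1), Polynomial.C ((n.choose (i + k) : ℤ)) * Polynomial.X ^ i := by
    refine Finset.sum_subset ?_ ?_
    · exact Finset.range_subset_range.mpr (by omega)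
    · intro i hi hni
      have h1 : n - k + 1 ≤ i := by
        by_contra h
        exact hni (Finset.mem_range.mpr (by omega))
      have h2 : i < n + 1 := Finset.mem_range.mp hi
      have h3 : n.choose (i + k) = 0 := Nat.choose_eq_zero_of_lt (by omega)
      simp [h3]
  have hk' : k - 1 + 1 = k := Nat.succ_pred_eq_of_pos hk
  have hmain := bin_aux (k - 1) n
  rw [hk'] at hmain
  rw [hext, hmain]
  exact ⟨rfl, ⟨n, fun i => (n - i - 1).choose (k - 1), rfl⟩⟩
end

section
/- Let n and k be positive integers with k < n. Then, as polynomials in ℤ[x], Σ_{j=0}^{n} C(n, j) · x^{|j−k|} = Σ_{i=1}^{n−1} (C(n−i−1, k−1) + C(n−i−1, n−k−1)) · (x+1)^i, where C(a,b) denotes the binomial coefficient, taken to be 0 when b > a. In particular, this polynomial is (x+1)-positive and its constant coefficient in the (x+1)-basis is 0. -/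
open Polynomial

lemma claimA (n : ℕ) : ∀ k : ℕ, 1 ≤ k → k ≤ n →
    (∑ j ∈ Finset.Icc k n, Polynomial.C ((n.choose j : ℤ)) * Polynomial.X ^ (j - k))
      = ∑ i ∈ Finset.range (n - k + 1),
          Polynomial.C (((n - i - 1).choose (k - 1) : ℤ)) * (Polynomial.X + 1) ^ i := by
  induction n with
  | zero => intro k hk hkn; omega
  | succ n ih =>
    intro k hk hkn
    rcases eq_or_lt_of_le hkn with hEq | hlt
    · subst hEq
      simp
    · -- k ≤ n
      have hkn' : k ≤ n := by omega
      -- shift index on LHS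
      have hshift : Finset.Icc k (n + 1) = (Finset.Icc (k - 1) n).map
          (addRightEmbedding 1) := by
        rw [Finset.map_add_right_Icc]
        congr 1
        omega
      rw [hshift, Finset.sum_map]
      simp only [addRightEmbedding_apply]
      have hpascal : ∀ j ∈ Finset.Icc (k-1) n,
          Polynomial.C (((n+1).choose (j+1) : ℤ)) * Polynomial.X ^ (j + 1 - k)
          = Polynomial.C ((n.choose j : ℤ)) * Polynomial.X ^ (j - (k-1))
            + Polynomial.C ((n.choose (j+1) : ℤ)) * Polynomial.X ^ (j - (k-1)) := by
        intro j hj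
        have h5 : j + 1 - k = j - (k - 1) := by omega
        rw [h5, Nat.choose_succ_succ, Nat.cast_add, Polynomial.C_add]
        ring
      rw [Finset.sum_congr rfl hpascal, Finset.sum_add_distrib]
      -- second sum is A(n,k)
      have h2 : (∑ j ∈ Finset.Icc (k-1) n, Polynomial.C ((n.choose (j+1) : ℤ)) * Polynomial.X ^ (j - (k-1)))
          = ∑ j ∈ Finset.Icc k n, Polynomial.C ((n.choose j : ℤ)) * Polynomial.X ^ (j - k) := by
        rw [show Finset.Icc k n = ((Finset.Icc (k-1) (n-1)).map (addRightEmbedding 1)) by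
          rw [Finset.map_add_right_Icc]; congr 1 <;> omega]
        rw [Finset.sum_map]
        simp only [addRightEmbedding_apply]
        rw [show Finset.Icc (k-1) n = insert n (Finset.Icc (k-1) (n-1)) by
          ext a; simp [Finset.mem_Icc, Finset.mem_insert]; omega]
        rw [Finset.sum_insert (by simp [Finset.mem_Icc]; omega)]
        simp [Nat.choose_succ_self]
        exact Finset.sum_congr rfl (fun j hj => by
          simp only [Finset.mem_Icc] at hj
          congr 2
          omega)
      rw [h2, ih k hk hkn']
      rcases eq_or_lt_of_le hk with h1 | h1
      · -- k = 1
        subst h1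
        have hfirst : (∑ j ∈ Finset.Icc (1-1) n, Polynomial.C ((n.choose j : ℤ)) * Polynomial.X ^ (j - (1-1)))
            = (Polynomial.X + 1) ^ n := by
          simp only [Nat.sub_self, Nat.sub_zero]
          rw [add_pow]
          rw [show Finset.Icc 0 n = Finset.range (n+1) by ext a; simp]
          refine Finset.sum_congr rfl (fun j hj => ?_)
          rw [map_natCast Polynomial.C (n.choose j)]
          ring
        rw [hfirst]
        simp only [show (1:ℕ)-1 = 0 from rfl, Nat.choose_zero_right, Nat.cast_one, map_one,
          one_mul]
        rw [show n - 1 + 1 = n from by omega, show n + 1 - 1 + 1 = n + 1 from rfl,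
          Finset.sum_range_succ]
        ring
      · -- k ≥ 2
        have hk2 : 2 ≤ k := h1
        rw [ih (k-1) (by omega) (by omega)]
        have hpas2 : ∀ i ∈ Finset.range (n + 1 - k + 1),
            Polynomial.C (((n + 1 - i - 1).choose (k - 1) : ℤ)) * (Polynomial.X + 1) ^ i
            = Polynomial.C (((n - i - 1).choose (k - 1 - 1) : ℤ)) * (Polynomial.X + 1) ^ i
              + Polynomial.C (((n - i - 1).choose (k - 1) : ℤ)) * (Polynomial.X + 1) ^ i := by
          intro i hi
          simp only [Finset.mem_range] at hi
          have h3 : n + 1 - i - 1 = (n - i - 1) + 1 := by omega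
          have h4 : (k - 1 - 1) + 1 = k - 1 := by omega
          rw [h3, ← h4, Nat.choose_succ_succ, Nat.cast_add, Polynomial.C_add]
          simp only [Nat.succ_eq_add_one, h4]
          ring
        rw [Finset.sum_congr rfl hpas2, Finset.sum_add_distrib]
        congr 1
        · apply Finset.sum_congr
          · congr 1
            omega
          · intro i hi
            rfl
        · refine Finset.sum_subset (fun i hi => ?_) (fun i hi hni => ?_)
          · simp only [Finset.mem_range] at hi ⊢; omega
          · simp only [Finset.mem_range, not_lt] at hi hni
            have : (n - i - 1).choose (k - 1) = 0 := Nat.choose_eq_zero_of_lt (by omega)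
            simp [this]

/-- **Proposition.** For positive integers `k < n`,
`Σ_{j=0}^{n} C(n, j) x^{|j−k|} = Σ_{i=1}^{n−1} (C(n−i−1, k−1) + C(n−i−1, n−k−1)) (x+1)ⁱ`
in `ℤ[x]`; in particular this polynomial is `(x+1)`-positive, with constant coefficient
`0` in the `(x+1)`-basis. -/
theorem bin_abs_expansion (n k : ℕ) (hk : 0 < k) (hkn : k < n) :
    (∑ j ∈ Finset.range (n + 1),
        Polynomial.C ((n.choose j : ℤ)) * Polynomial.X ^ (((j : ℤ) - (k : ℤ)).natAbs))
      = (∑ i ∈ Finset.Icc 1 (n - 1),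
          Polynomial.C (((n - i - 1).choose (k - 1) + (n - i - 1).choose (n - k - 1) : ℕ) : ℤ)
            * (Polynomial.X + 1) ^ i)
    ∧ XAddOnePositive
        (∑ j ∈ Finset.range (n + 1),
          Polynomial.C ((n.choose j : ℤ)) * Polynomial.X ^ (((j : ℤ) - (k : ℤ)).natAbs)) := by
  have main : (∑ j ∈ Finset.range (n + 1),
        Polynomial.C ((n.choose j : ℤ)) * Polynomial.X ^ (((j : ℤ) - (k : ℤ)).natAbs))
      = (∑ i ∈ Finset.Icc 1 (n - 1),
          Polynomial.C (((n - i - 1).choose (k - 1) + (n - i - 1).choose (n - k - 1) : ℕ) : ℤ)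
            * (Polynomial.X + 1) ^ i) := by
    have claimA := claimA
    have hn2 : 2 ≤ n := by omega
    -- split LHS
    rw [Finset.range_eq_Ico, ← Finset.sum_Ico_consecutive _ (Nat.zero_le k) (by omega : k ≤ n + 1)]
    -- upper part
    have hup : (∑ j ∈ Finset.Ico k (n+1),
        Polynomial.C ((n.choose j : ℤ)) * Polynomial.X ^ (((j : ℤ) - (k : ℤ)).natAbs))
        = ∑ j ∈ Finset.Icc k n, Polynomial.C ((n.choose j : ℤ)) * Polynomial.X ^ (j - k) := by
      rw [Finset.Ico_add_one_right_eq_Icc]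
      refine Finset.sum_congr rfl (fun j hj => ?_)
      simp only [Finset.mem_Icc] at hj
      have : ((j : ℤ) - (k : ℤ)).natAbs = j - k := by omega
      rw [this]
    -- lower part: reflect j ↦ n - j
    have hlow : (∑ j ∈ Finset.Ico 0 k,
        Polynomial.C ((n.choose j : ℤ)) * Polynomial.X ^ (((j : ℤ) - (k : ℤ)).natAbs))
        = ∑ j ∈ Finset.Icc (n-k+1) n,
            Polynomial.C ((n.choose j : ℤ)) * Polynomial.X ^ (j - (n-k)) := by
      refine Finset.sum_nbij' (fun j => n - j) (fun j => n - j) ?_ ?_ ?_ ?_ ?_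
      · intro a ha; simp only [Finset.mem_Ico, Finset.mem_Icc] at *; omega
      · intro a ha; simp only [Finset.mem_Ico, Finset.mem_Icc] at *; omega
      · intro a ha; simp only [Finset.mem_Ico] at ha; show n - (n - a) = a; omega
      · intro a ha; simp only [Finset.mem_Icc] at ha; show n - (n - a) = a; omega
      · intro a ha
        simp only [Finset.mem_Ico] at ha
        have h1 : ((a:ℤ) - (k:ℤ)).natAbs = n - a - (n - k) := by omega
        rw [h1, Nat.choose_symm (show a ≤ n by omega)]
    -- peel off bottom element n - k
    have hins : (∑ j ∈ Finset.Icc (n-k+1) n,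
        Polynomial.C ((n.choose j : ℤ)) * Polynomial.X ^ (j - (n-k)))
        = (∑ j ∈ Finset.Icc (n-k) n,
            Polynomial.C ((n.choose j : ℤ)) * Polynomial.X ^ (j - (n-k)))
          - Polynomial.C ((n.choose (n-k) : ℤ)) := by
      rw [show Finset.Icc (n-k) n = insert (n-k) (Finset.Icc (n-k+1) n) by
        ext a; simp only [Finset.mem_Icc, Finset.mem_insert]; omega]
      rw [Finset.sum_insert (by simp only [Finset.mem_Icc]; omega)]
      simp
    rw [hup, hlow, hins, claimA n k hk hkn.le, claimA n (n-k) (by omega) (by omega)]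
    -- now all in (X+1)-basis; extend ranges to range n and combine
    have hxk : (∑ i ∈ Finset.range (n - k + 1),
        Polynomial.C (((n - i - 1).choose (k - 1) : ℤ)) * (Polynomial.X + 1) ^ i)
        = ∑ i ∈ Finset.range n,
            Polynomial.C (((n - i - 1).choose (k - 1) : ℤ)) * (Polynomial.X + 1) ^ i := by
      refine Finset.sum_subset (fun i hi => ?_) (fun i hi hni => ?_)
      · simp only [Finset.mem_range] at hi ⊢; omega
      · simp only [Finset.mem_range, not_lt] at hi hni
        have : (n - i - 1).choose (k - 1) = 0 := Nat.choose_eq_zero_of_lt (by omega)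
        simp [this]
    have hxnk : (∑ i ∈ Finset.range (n - (n-k) + 1),
        Polynomial.C (((n - i - 1).choose (n - k - 1) : ℤ)) * (Polynomial.X + 1) ^ i)
        = ∑ i ∈ Finset.range n,
            Polynomial.C (((n - i - 1).choose (n - k - 1) : ℤ)) * (Polynomial.X + 1) ^ i := by
      refine Finset.sum_subset (fun i hi => ?_) (fun i hi hni => ?_)
      · simp only [Finset.mem_range] at hi ⊢; omega
      · simp only [Finset.mem_range, not_lt] at hi hni
        have : (n - i - 1).choose (n - k - 1) = 0 := Nat.choose_eq_zero_of_lt (by omega)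
        simp [this]
    have pascal' : ∀ a b : ℕ, 1 ≤ a → 1 ≤ b →
        a.choose b = (a-1).choose (b-1) + (a-1).choose b := by
      intro a b ha hb
      rcases a with _|a
      · omega
      rcases b with _|b
      · omega
      simp [Nat.choose_succ_succ]
    have e1 : (n-1).choose (n-k) = (n-1).choose (k-1) := by
      rw [← Nat.choose_symm (show n-k ≤ n-1 by omega)]
      congr 1
      omega
    have hnat : (n - 0 - 1).choose (n-k-1) + (n - 0 - 1).choose (k-1) = n.choose (n-k) := by
      simp only [Nat.sub_zero]
      rw [pascal' n (n-k) (by omega) (by omega), e1]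
    rw [hxk, hxnk, sub_add_eq_add_sub, ← Finset.sum_add_distrib]
    rw [show Finset.range n = insert 0 (Finset.Icc 1 (n-1)) from by
      ext a; simp only [Finset.mem_range, Finset.mem_insert, Finset.mem_Icc]; omega]
    rw [Finset.sum_insert (by simp only [Finset.mem_Icc]; omega)]
    have hsum : (∑ i ∈ Finset.Icc 1 (n-1),
        (Polynomial.C (((n - i - 1).choose (n - k - 1) : ℤ)) * (Polynomial.X + 1) ^ i
          + Polynomial.C (((n - i - 1).choose (k - 1) : ℤ)) * (Polynomial.X + 1) ^ i))
        = ∑ i ∈ Finset.Icc 1 (n - 1),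
            Polynomial.C (((n - i - 1).choose (k - 1) + (n - i - 1).choose (n - k - 1) : ℕ) : ℤ)
              * (Polynomial.X + 1) ^ i := by
      refine Finset.sum_congr rfl (fun i hi => ?_)
      rw [Nat.cast_add, Polynomial.C_add]
      ring
    rw [hsum]
    have h0 : Polynomial.C (((n - 0 - 1).choose (n - k - 1) : ℤ)) * (Polynomial.X + 1) ^ 0
        + Polynomial.C (((n - 0 - 1).choose (k - 1) : ℤ)) * (Polynomial.X + 1) ^ 0
        = Polynomial.C ((n.choose (n-k) : ℤ)) := by
      rw [pow_zero, mul_one, mul_one, ← Polynomial.C_add, ← Nat.cast_add, hnat]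
    rw [h0]
    ring

  refine ⟨main, n, fun i => if i = 0 then 0
      else (n - i - 1).choose (k - 1) + (n - i - 1).choose (n - k - 1), ?_⟩
  rw [main]
  rw [show Finset.range n = insert 0 (Finset.Icc 1 (n-1)) from by
    ext a; simp only [Finset.mem_range, Finset.mem_insert, Finset.mem_Icc]; omega]
  rw [Finset.sum_insert (by simp only [Finset.mem_Icc]; omega)]
  norm_num
  refine Finset.sum_congr rfl (fun i hi => ?_)
  simp only [Finset.mem_Icc] at hi
  rw [if_neg (by omega)]
end

section
/- For natural numbers r, l, u, d, define F(r, l, u, d) ∈ ℤ[x] by F(r, l, u, d) = Σ_{k∈ℤ} x^{|k|} · C(r+u, u+k) · C(l+d, d−k), where C(a,b) denotes the binomial coefficient, taken to be 0 unless 0 ≤ b ≤ a (so the sum is finite). Then (r+l)! · (u+d)! · F(r, l, u, d) = (r+u)! · (l+d)! · F(r, u, l, d), as polynomials in ℤ[x]. -/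
open Polynomial

/-- Binomial coefficient with integer arguments, equal to 0 unless `0 ≤ b ≤ a`. -/
def zch (a b : ℤ) : ℕ := if 0 ≤ b ∧ b ≤ a then a.toNat.choose b.toNat else 0

/-- `Fgen r l u d = Σ_{k ∈ ℤ} x^{|k|} C(r+u, u+k) C(l+d, d−k)`: by the signed
peak-count enumeration theorem, this is the generating function counting shuffles of a
vertical path with `u` North and `d` South steps and a horizontal path with `r` East and
`l` West steps according to the absolute value of their signed peak-count.  (All nonzero
terms of the sum over `k ∈ ℤ` have `−u ≤ k ≤ r`.) -/
noncomputable def Fgen (r l u d : ℕ) : Polynomial ℤ :=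
  ∑ k ∈ Finset.Icc (-(u : ℤ)) (r : ℤ),
    Polynomial.C ((zch ((r : ℤ) + u) ((u : ℤ) + k) * zch ((l : ℤ) + d) ((d : ℤ) - k) : ℕ) : ℤ)
      * Polynomial.X ^ k.natAbs

lemma zch_natCast (a b : ℕ) : zch (a : ℤ) (b : ℤ) = a.choose b := by
  simp only [zch]
  split_ifs with h
  · simp
  · have : a < b := by omega
    simp [Nat.choose_eq_zero_of_lt this]

lemma key (a b c e : ℕ) :
    (b + c).factorial * (a + e).factorial * ((a + b).choose a * (c + e).choose e)
      = (a + b).factorial * (c + e).factorial * ((b + c).choose c * (a + e).choose e) := by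
  have h1 : (a + b).choose a * a.factorial * b.factorial = (a + b).factorial := by
    simpa using Nat.choose_mul_factorial_mul_factorial (Nat.le_add_right a b)
  have h2 : (c + e).choose e * e.factorial * c.factorial = (c + e).factorial := by
    simpa using Nat.choose_mul_factorial_mul_factorial (Nat.le_add_left e c)
  have h3 : (b + c).choose c * c.factorial * b.factorial = (b + c).factorial := by
    simpa using Nat.choose_mul_factorial_mul_factorial (Nat.le_add_left c b)
  have h4 : (a + e).choose e * e.factorial * a.factorial = (a + e).factorial := by
    simpa using Nat.choose_mul_factorial_mul_factorial (Nat.le_add_left e a)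
  rw [← h1, ← h2, ← h3, ← h4]
  ring

lemma termwise (r l u d : ℕ) (k : ℤ) :
    (r + l).factorial * (u + d).factorial
        * (zch ((r : ℤ) + u) ((u : ℤ) + k) * zch ((l : ℤ) + d) ((d : ℤ) - k))
      = (r + u).factorial * (l + d).factorial
        * (zch ((r : ℤ) + l) ((l : ℤ) + k) * zch ((u : ℤ) + d) ((d : ℤ) - k)) := by
  by_cases h : -(u : ℤ) ≤ k ∧ -(l : ℤ) ≤ k ∧ k ≤ (r : ℤ) ∧ k ≤ (d : ℤ)
  · obtain ⟨h1, h2, h3, h4⟩ := h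
    set a := ((u : ℤ) + k).toNat with ha
    set b := ((r : ℤ) - k).toNat with hb
    set c := ((l : ℤ) + k).toNat with hc
    set e := ((d : ℤ) - k).toNat with he
    have e1 : ((r : ℤ) + u) = ((r + u : ℕ) : ℤ) := by push_cast; ring
    have e2 : ((u : ℤ) + k) = ((a : ℕ) : ℤ) := by omega
    have e3 : ((l : ℤ) + d) = ((l + d : ℕ) : ℤ) := by push_cast; ring
    have e4 : ((d : ℤ) - k) = ((e : ℕ) : ℤ) := by omega
    have e5 : ((r : ℤ) + l) = ((r + l : ℕ) : ℤ) := by push_cast; ring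
    have e6 : ((l : ℤ) + k) = ((c : ℕ) : ℤ) := by omega
    have e7 : ((u : ℤ) + d) = ((u + d : ℕ) : ℤ) := by push_cast; ring
    rw [e1, e2, e3, e4, e5, e6, e7, zch_natCast, zch_natCast, zch_natCast, zch_natCast]
    have f1 : r + u = a + b := by omega
    have f2 : l + d = c + e := by omega
    have f3 : r + l = b + c := by omega
    have f4 : u + d = a + e := by omega
    rw [f1, f2, f3, f4]
    exact key a b c e
  · have hL : zch ((r : ℤ) + u) ((u : ℤ) + k) * zch ((l : ℤ) + d) ((d : ℤ) - k) = 0 := by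
      simp only [zch]
      split_ifs with h1 h2 <;> first | (exfalso; omega) | simp
    have hR : zch ((r : ℤ) + l) ((l : ℤ) + k) * zch ((u : ℤ) + d) ((d : ℤ) - k) = 0 := by
      simp only [zch]
      split_ifs with h1 h2 <;> first | (exfalso; omega) | simp
    rw [hL, hR]
    simp

/-- **Proposition (scaling symmetry of `F`).**
`(r+l)! (u+d)! F(r, l, u, d) = (r+u)! (l+d)! F(r, u, l, d)` in `ℤ[x]`. -/
theorem Fgen_scaling (r l u d : ℕ) :
    Polynomial.C (((r + l).factorial * (u + d).factorial : ℕ) : ℤ) * Fgen r l u d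
      = Polynomial.C (((r + u).factorial * (l + d).factorial : ℕ) : ℤ) * Fgen r u l d := by
  unfold Fgen
  rw [Finset.mul_sum, Finset.mul_sum]
  have hsub1 : Finset.Icc (-(u : ℤ)) (r : ℤ) ⊆ Finset.Icc (-(u : ℤ) - (l : ℤ)) (r : ℤ) := by
    intro x hx
    simp only [Finset.mem_Icc] at *
    omega
  have hsub2 : Finset.Icc (-(l : ℤ)) (r : ℤ) ⊆ Finset.Icc (-(u : ℤ) - (l : ℤ)) (r : ℤ) := by
    intro x hx
    simp only [Finset.mem_Icc] at *
    omega
  rw [Finset.sum_subset hsub1 (by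
    intro k hk hk'
    simp only [Finset.mem_Icc] at hk hk'
    have : zch ((r : ℤ) + u) ((u : ℤ) + k) = 0 := by
      simp only [zch]
      split_ifs with hc
      · exfalso; omega
      · rfl
    simp [this])]
  rw [Finset.sum_subset hsub2 (by
    intro k hk hk'
    simp only [Finset.mem_Icc] at hk hk'
    have : zch ((r : ℤ) + l) ((l : ℤ) + k) = 0 := by
      simp only [zch]
      split_ifs with hc
      · exfalso; omega
      · rfl
    simp [this])]
  refine Finset.sum_congr rfl fun k _ => ?_
  rw [← mul_assoc, ← Polynomial.C_mul, ← mul_assoc, ← Polynomial.C_mul]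
  congr 2
  exact_mod_cast termwise r l u d k
end
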